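/- arXiv:1708.02095 — 2 statements merged into one kernel-verified Lean document; each statement's English description precedes it below -/
import Mathlib

section
/- For every p ≥ 3/2, the function f_p : [0,∞) → [0,∞) defined implicitly by f_p((1+s)log(1+s)) = s^p for s ≥ 0 (and f_p(0) = 0) is well-defined, nondecreasing and convex. -/
/-!
Extend ξ(s) = (1 + s) log(1 + s) by the identity on (-∞, 0]; this gives an order automorphism of ℝ,
and f_p = (ξ⁻¹)^p. For y = ξ(s) > 0 the inverse function theorem gives
f_p'(y) = p s^(p-1) / ξ'(s) = p s^(p-1) / (1 + log(1 + s)), a function of s that is nondecreasing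
because s / (1 + s) ≤ (p - 1)(1 + log(1 + s)) when p ≥ 3/2. Since s = ξ⁻¹(y) is increasing
in y, f_p' is nondecreasing, hence f_p is convex.
-/

open Real Set Filter

lemma hasDerivAt_one_add_mul_log_one_add {s : ℝ} (hs : -1 < s) :
    HasDerivAt (fun t => (1 + t) * log (1 + t)) (1 + log (1 + s)) s := by
  have hlin : HasDerivAt (fun t : ℝ => 1 + t) 1 s := (hasDerivAt_id s).const_add 1
  have hne : 1 + s ≠ 0 := by linarith
  refine (hlin.mul ((hasDerivAt_log hne).comp s hlin)).congr_deriv ?_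
  simp only [Function.comp_apply]
  field_simp
  ring

lemma one_add_log_one_add_pos {s : ℝ} (hs : 0 ≤ s) : 0 < 1 + log (1 + s) := by
  have := log_nonneg (by linarith : (1 : ℝ) ≤ 1 + s)
  linarith

lemma strictMonoOn_one_add_mul_log_one_add :
    StrictMonoOn (fun s : ℝ => (1 + s) * log (1 + s)) (Ici 0) := by
  intro a (ha : 0 ≤ a) b _ hab
  have hlog_le : log (1 + a) ≤ log (1 + b) := log_le_log (by linarith) (by linarith)
  have hlog_pos : 0 < log (1 + b) := log_pos (by linarith)
  have := log_nonneg (by linarith : (1 : ℝ) ≤ 1 + a)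
  dsimp only
  nlinarith

lemma div_one_add_le_log_one_add {s : ℝ} (hs : -1 < s) : s / (1 + s) ≤ log (1 + s) := by
  have h1s : 0 < 1 + s := by linarith
  calc s / (1 + s) = 1 - (1 + s)⁻¹ := by field_simp; ring
    _ ≤ log (1 + s) := one_sub_inv_le_log_of_pos h1s

lemma le_one_add_mul_log_one_add {s : ℝ} (hs : -1 < s) : s ≤ (1 + s) * log (1 + s) := by
  have h1s : 0 < 1 + s := by linarith
  calc s = (1 + s) * (s / (1 + s)) := by field_simp
    _ ≤ (1 + s) * log (1 + s) := by gcongr; exact div_one_add_le_log_one_add hs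

noncomputable def xiExt (s : ℝ) : ℝ := if s ≤ 0 then s else (1 + s) * log (1 + s)

lemma xiExt_of_nonneg {s : ℝ} (hs : 0 ≤ s) : xiExt s = (1 + s) * log (1 + s) := by
  rcases hs.eq_or_lt with rfl | hs
  · simp [xiExt]
  · simp [xiExt, hs.not_ge]

lemma xiExt_zero : xiExt 0 = 0 := by simp [xiExt]

lemma xiExt_strictMono : StrictMono xiExt := by
  refine StrictMonoOn.Iic_union_Ici (a := 0) (fun a (ha : a ≤ 0) b (hb : b ≤ 0) hab => ?_) ?_
  · simpa [xiExt, ha, hb] using hab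
  · intro a ha b hb hab
    rw [xiExt_of_nonneg ha, xiExt_of_nonneg hb]
    exact strictMonoOn_one_add_mul_log_one_add ha hb hab

lemma xiExt_continuous : Continuous xiExt :=
  continuous_id.if_le (by fun_prop) continuous_id continuous_const fun s hs => by simp [hs]

lemma xiExt_surjective : Function.Surjective xiExt := by
  refine xiExt_continuous.surjective ?_ ?_
  · refine tendsto_atTop_mono' atTop ?_ tendsto_id
    filter_upwards [eventually_ge_atTop 0] with s hs
    rw [xiExt_of_nonneg hs]
    exact le_one_add_mul_log_one_add (s := s) (by linarith)
  · refine tendsto_id.congr' ?_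
    filter_upwards [eventually_le_atBot 0] with s hs
    simp [xiExt, hs]

noncomputable def xiExtOrderIso : ℝ ≃o ℝ :=
  StrictMono.orderIsoOfSurjective xiExt xiExt_strictMono xiExt_surjective

lemma coe_xiExtOrderIso : (xiExtOrderIso : ℝ → ℝ) = xiExt := rfl

lemma xiExtOrderIso_symm_zero : xiExtOrderIso.symm 0 = 0 := by
  rw [OrderIso.symm_apply_eq, coe_xiExtOrderIso, xiExt_zero]

lemma xiExtOrderIso_symm_pos {y : ℝ} (hy : 0 < y) : 0 < xiExtOrderIso.symm y := by
  simpa [xiExtOrderIso_symm_zero] using xiExtOrderIso.symm.strictMono hy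

lemma xiExtOrderIso_symm_nonneg {y : ℝ} (hy : 0 ≤ y) : 0 ≤ xiExtOrderIso.symm y := by
  simpa [xiExtOrderIso_symm_zero] using xiExtOrderIso.symm.monotone hy

lemma hasDerivAt_xiExtOrderIso_symm {y : ℝ} (hy : 0 < y) :
    HasDerivAt xiExtOrderIso.symm (1 + log (1 + xiExtOrderIso.symm y))⁻¹ y := by
  set s := xiExtOrderIso.symm y
  have hs : 0 < s := xiExtOrderIso_symm_pos hy
  have hxi : HasDerivAt xiExt (1 + log (1 + s)) s := by
    refine (hasDerivAt_one_add_mul_log_one_add (by linarith)).congr_of_eventuallyEq ?_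
    filter_upwards [lt_mem_nhds hs] with t ht
    exact xiExt_of_nonneg ht.le
  exact hxi.of_local_left_inverse xiExtOrderIso.symm.continuous.continuousAt
    (one_add_log_one_add_pos hs.le).ne' (Eventually.of_forall xiExtOrderIso.apply_symm_apply)

lemma div_one_add_le_mul_one_add_log {p s : ℝ} (hp : 3 / 2 ≤ p) (hs : 0 ≤ s) :
    s / (1 + s) ≤ (p - 1) * (1 + log (1 + s)) := by
  have hlog := div_one_add_le_log_one_add (by linarith : -1 < s)
  have hle_one : s / (1 + s) ≤ 1 := (div_le_one (by linarith)).2 (by linarith)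
  nlinarith [one_add_log_one_add_pos hs]

/-- `(s ^ p)' / ξ'(s)`, the derivative of `f_p` at `ξ(s)`. -/
noncomputable def derivRatio (p s : ℝ) : ℝ := p * s ^ (p - 1) / (1 + log (1 + s))

lemma hasDerivAt_derivRatio {p s : ℝ} (hs : 0 < s) :
    HasDerivAt (derivRatio p)
      (p * s ^ (p - 2) * ((p - 1) * (1 + log (1 + s)) - s / (1 + s)) / (1 + log (1 + s)) ^ 2) s := by
  have hnum : HasDerivAt (fun t => p * t ^ (p - 1)) (p * ((p - 1) * s ^ (p - 1 - 1))) s :=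
    (hasDerivAt_rpow_const (Or.inl hs.ne')).const_mul p
  have hlin : HasDerivAt (fun t : ℝ => 1 + t) 1 s := (hasDerivAt_id s).const_add 1
  have hden : HasDerivAt (fun t => 1 + log (1 + t)) ((1 + s)⁻¹ * 1) s :=
    ((hasDerivAt_log (by linarith)).comp s hlin).const_add 1
  have hpow : s ^ (p - 1) = s ^ (p - 2) * s := by
    rw [← rpow_add_one hs.ne']; ring_nf
  refine (hnum.div hden (one_add_log_one_add_pos hs.le).ne').congr_deriv ?_
  rw [hpow, show p - 1 - 1 = p - 2 by ring]
  field_simp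

lemma monotoneOn_derivRatio {p : ℝ} (hp : 3 / 2 ≤ p) : MonotoneOn (derivRatio p) (Ici 0) := by
  refine monotoneOn_of_hasDerivWithinAt_nonneg (f' := fun s =>
    p * s ^ (p - 2) * ((p - 1) * (1 + log (1 + s)) - s / (1 + s)) / (1 + log (1 + s)) ^ 2)
    (convex_Ici 0) ?_ ?_ ?_
  · intro s (hs : 0 ≤ s)
    have h1s : 1 + s ≠ 0 := by linarith
    have hden : 1 + log (1 + s) ≠ 0 := (one_add_log_one_add_pos hs).ne'
    have hexp : s ≠ 0 ∨ 0 ≤ p - 1 := Or.inr (by linarith)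
    exact ContinuousAt.continuousWithinAt (by unfold derivRatio; fun_prop (disch := assumption))
  · intro s hs
    rw [interior_Ici] at hs
    exact (hasDerivAt_derivRatio hs).hasDerivWithinAt
  · intro s hs
    rw [interior_Ici] at hs
    have hkey := div_one_add_le_mul_one_add_log hp hs.le
    have hp₀ : 0 < p := by linarith
    have hpow : 0 < s ^ (p - 2) := rpow_pos_of_pos hs _
    have hnum : 0 ≤ (p - 1) * (1 + log (1 + s)) - s / (1 + s) := by linarith
    positivity

lemma hasDerivAt_rpow_xiExtOrderIso_symm {p y : ℝ} (hy : 0 < y) :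
    HasDerivAt (fun x => xiExtOrderIso.symm x ^ p) (derivRatio p (xiExtOrderIso.symm y)) y := by
  have hs := xiExtOrderIso_symm_pos hy
  refine ((hasDerivAt_rpow_const (Or.inl hs.ne')).comp y
    (hasDerivAt_xiExtOrderIso_symm hy)).congr_deriv ?_
  rw [derivRatio, div_eq_mul_inv]

lemma convexOn_rpow_xiExtOrderIso_symm {p : ℝ} (hp : 3 / 2 ≤ p) :
    ConvexOn ℝ (Ici 0) fun x => xiExtOrderIso.symm x ^ p := by
  refine MonotoneOn.convexOn_of_deriv (convex_Ici 0) ?_ ?_ ?_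
  · exact (xiExtOrderIso.symm.continuous.rpow_const fun _ => Or.inr (by linarith)).continuousOn
  · intro y hy
    rw [interior_Ici] at hy
    exact (hasDerivAt_rpow_xiExtOrderIso_symm hy).differentiableAt.differentiableWithinAt
  · intro x hx y hy hxy
    rw [interior_Ici] at hx hy
    rw [(hasDerivAt_rpow_xiExtOrderIso_symm hx).deriv, (hasDerivAt_rpow_xiExtOrderIso_symm hy).deriv]
    exact monotoneOn_derivRatio hp (xiExtOrderIso_symm_nonneg hx.le)
      (xiExtOrderIso_symm_nonneg hy.le) (xiExtOrderIso.symm.monotone hxy)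

theorem f_p_well_defined_monotone_convex (p : ℝ) (hp : 3 / 2 ≤ p) :
    ∃ f : ℝ → ℝ,
      (∀ s : ℝ, 0 ≤ s → f ((1 + s) * Real.log (1 + s)) = s ^ p) ∧
      f 0 = 0 ∧
      MonotoneOn f (Set.Ici 0) ∧
      ConvexOn ℝ (Set.Ici 0) f := by
  have hp₀ : 0 < p := by linarith
  refine ⟨fun y => xiExtOrderIso.symm y ^ p, fun s hs => ?_, ?_, fun x (hx : 0 ≤ x) y _ hxy => ?_,
    convexOn_rpow_xiExtOrderIso_symm hp⟩
  · dsimp only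
    rw [← xiExt_of_nonneg hs, ← coe_xiExtOrderIso, OrderIso.symm_apply_apply]
  · dsimp only
    rw [xiExtOrderIso_symm_zero, zero_rpow hp₀.ne']
  · exact rpow_le_rpow (xiExtOrderIso_symm_nonneg hx) (xiExtOrderIso.symm.monotone hxy) hp₀.le
end

section
/- For all p ≥ 3/2 and all s ≥ 0, (p−1)(1+s)(1+log(1+s))² − s ≥ 0. -/
open Real

lemma self_sub_one_le_mul_one_add_log_sq {c t : ℝ} (hc : 1 / 2 ≤ c) (ht : 0 ≤ t) :
    t - 1 ≤ c * t * (1 + log t) ^ 2 := by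
  have hsq : 2 * log t ≤ (1 + log t) ^ 2 := by nlinarith [sq_nonneg (log t)]
  have hnonneg : 0 ≤ t * (1 + log t) ^ 2 := by positivity
  calc t - 1 ≤ t * log t := self_sub_one_le_mul_log ht
    _ ≤ 1 / 2 * (t * (1 + log t) ^ 2) := by linarith [mul_le_mul_of_nonneg_left hsq ht]
    _ ≤ c * (t * (1 + log t) ^ 2) := mul_le_mul_of_nonneg_right hc hnonneg
    _ = c * t * (1 + log t) ^ 2 := by ring

theorem convexity_key_inequality (p s : ℝ) (hp : 3 / 2 ≤ p) (hs : 0 ≤ s) :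
    0 ≤ (p - 1) * (1 + s) * (1 + Real.log (1 + s)) ^ 2 - s := by
  have key := self_sub_one_le_mul_one_add_log_sq (c := p - 1) (t := 1 + s)
    (by linarith) (by linarith)
  linarith
end
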